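/- arXiv:1508.07837 — 4 statements merged into one kernel-verified Lean document; each statement's English description precedes it below -/
import Mathlib

section
/- f is level C-bounded at x̄ (i.e., f(X) ∩ (f(x̄) − C) ⊆ M + C for some bounded set M ⊆ Y) if and only if x̄ is an ε-minimal point of f for some ε ≥ 0. -/
/-!
Both conditions say that the level set `f(X) ∩ (f x̄ - C)` lies in `B + C` for a closed ball `B`:
every bounded set sits in a closed ball centred at `f x̄`, and `{f x̄} + ε • closedBall 0 1` is the
closed ball of radius `ε` about `f x̄`.
-/

open Pointwise Metric

theorem exists_isBounded_subset_add_iff {Y : Type*} [PseudoMetricSpace Y] [Add Y]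
    (S C : Set Y) (y : Y) :
    (∃ M : Set Y, Bornology.IsBounded M ∧ S ⊆ M + C) ↔
      ∃ ε : ℝ, 0 ≤ ε ∧ S ⊆ closedBall y ε + C := by
  constructor
  · rintro ⟨M, hM, hS⟩
    obtain ⟨ε, hε, hMε⟩ := hM.subset_closedBall_lt 0 y
    exact ⟨ε, hε.le, hS.trans (Set.add_subset_add_right hMε)⟩
  · rintro ⟨ε, -, hS⟩
    exact ⟨closedBall y ε, isBounded_closedBall, hS⟩

theorem singleton_add_add_smul_unitClosedBall {E : Type*} [NormedAddCommGroup E]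
    [NormedSpace ℝ E] (y : E) (C : Set E) {ε : ℝ} (hε : 0 ≤ ε) :
    {y} + C + ε • closedBall (0 : E) 1 = closedBall y ε + C := by
  rw [add_right_comm, smul_unitClosedBall_of_nonneg hε, singleton_add_closedBall, add_zero]

theorem stmt_1_general {X : Type*} {Y : Type*} [NormedAddCommGroup Y]
    [NormedSpace ℝ Y] (C : Set Y)
    (f : X → Y) (xbar : X) :
    (∃ M : Set Y, Bornology.IsBounded M ∧
        (f '' Set.univ) ∩ ({f xbar} - C) ⊆ M + C) ↔
      (∃ ε : ℝ, 0 ≤ ε ∧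
        (f '' Set.univ) ∩ ({f xbar} - C) ⊆ {f xbar} + C + ε • closedBall (0:Y) 1) := by
  rw [exists_isBounded_subset_add_iff _ C (f xbar)]
  refine exists_congr fun ε => and_congr_right fun hε => ?_
  rw [singleton_add_add_smul_unitClosedBall _ _ hε]

/-- `f` is level `C`-bounded at `xbar` (i.e. `f(X) ∩ (f xbar - C) ⊆ M + C`
for some bounded `M ⊆ Y`) iff `xbar` is an `ε`-minimal point of `f` for some `ε ≥ 0`. -/
theorem stmt_1 {X : Type*} [MetricSpace X] {Y : Type*} [NormedAddCommGroup Y]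
    [NormedSpace ℝ Y] (C : Set Y)
    (hC0 : (0:Y) ∈ C)
    (hCadd : ∀ a ∈ C, ∀ b ∈ C, a + b ∈ C)
    (hCsmul : ∀ a ∈ C, ∀ t : ℝ, 0 < t → t • a ∈ C)
    (hCpointed : C ∩ (-C) = {(0:Y)})
    (f : X → Y) (xbar : X) :
    (∃ M : Set Y, Bornology.IsBounded M ∧
        (f '' Set.univ) ∩ ({f xbar} - C) ⊆ M + C) ↔
      (∃ ε : ℝ, 0 ≤ ε ∧
        (f '' Set.univ) ∩ ({f xbar} - C) ⊆ {f xbar} + C + ε • closedBall (0:Y) 1) :=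
  stmt_1_general C f xbar
end

section
/- f is C-lower semicontinuous with respect to c̄ if and only if for every y ∈ Y and every continuous function g : X → ℝ, the set {x ∈ X : y − f(x) − g(x)·c̄ ∈ C} is closed. -/
open Filter Topology

/-- `f` is `C`-lower semicontinuous with respect to `cbar` iff for every
`y ∈ Y` and every continuous `g : X → ℝ`, the set `{x | y - f x - g x • cbar ∈ C}`
is closed. -/
theorem stmt_6 {X : Type*} [MetricSpace X] {Y : Type*} [NormedAddCommGroup Y]
    [NormedSpace ℝ Y] (C : Set Y)
    (hC0 : (0:Y) ∈ C)
    (hCadd : ∀ a ∈ C, ∀ b ∈ C, a + b ∈ C)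
    (hCsmul : ∀ a ∈ C, ∀ t : ℝ, 0 < t → t • a ∈ C)
    (hCpointed : C ∩ (-C) = {(0:Y)}) (hCclosed : IsClosed C)
    (cbar : Y) (hcbar : cbar ∈ C) (f : X → Y) :
    (∀ (x : X) (xk : ℕ → X) (εk : ℕ → ℝ) (y : Y),
        Tendsto xk atTop (nhds x) → Tendsto εk atTop (nhds 0) →
        (∀ k, y - f (xk k) - εk k • cbar ∈ C) → y - f x ∈ C) ↔
      (∀ (y : Y) (g : X → ℝ), Continuous g →
        IsClosed {x : X | y - f x - g x • cbar ∈ C}) := by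
  have hsmul_nonneg : ∀ t : ℝ, 0 ≤ t → t • cbar ∈ C := by
    intro t ht
    rcases eq_or_lt_of_le ht with h | h
    · simp [← h, hC0]
    · exact hCsmul cbar hcbar t h
  constructor
  · intro H y g hg
    apply IsSeqClosed.isClosed
    intro xk x hmem hx
    have hε : Tendsto (fun k => g (xk k) - g x) atTop (nhds 0) := by
      have : Tendsto (fun k => g (xk k)) atTop (nhds (g x)) :=
        (hg.continuousAt).tendsto.comp hx
      simpa using this.sub_const (g x)
    have hmem' : ∀ k, (y - g x • cbar) - f (xk k) - (g (xk k) - g x) • cbar ∈ C := by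
      intro k
      have := hmem k
      simp only [Set.mem_setOf_eq] at this ⊢
      have : (y - g x • cbar) - f (xk k) - (g (xk k) - g x) • cbar
          = y - f (xk k) - g (xk k) • cbar := by
        rw [sub_smul]; abel
      rw [this]
      exact hmem k
    have := H x xk (fun k => g (xk k) - g x) (y - g x • cbar) hx hε hmem'
    simpa [sub_sub, Set.mem_setOf_eq, add_comm] using this
  · intro H x xk εk y hx hε hmem
    -- Step 1: for every δ > 0, y - f x + δ • cbar ∈ C
    have key : ∀ δ : ℝ, 0 < δ → y - f x + δ • cbar ∈ C := by
      intro δ hδ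
      have hS : IsClosed {z : X | (y + δ • cbar) - f z - (0:X → ℝ) z • cbar ∈ C} :=
        H (y + δ • cbar) 0 continuous_const
      -- eventually εk k ≥ -δ
      have hev : ∀ᶠ k in atTop, xk k ∈ {z : X | (y + δ • cbar) - f z - (0:X → ℝ) z • cbar ∈ C} := by
        have : ∀ᶠ k in atTop, -δ < εk k := by
          have := hε (Ioi_mem_nhds (show -δ < (0:ℝ) by linarith))
          simpa [Set.mem_Ioi] using this
        filter_upwards [this] with k hk
        simp only [Set.mem_setOf_eq, Pi.zero_apply, zero_smul, sub_zero]
        have h1 : y - f (xk k) - εk k • cbar ∈ C := hmem k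
        have h2 : (εk k + δ) • cbar ∈ C := hsmul_nonneg _ (by linarith)
        have h3 := hCadd _ h1 _ h2
        have : y - f (xk k) - εk k • cbar + (εk k + δ) • cbar
            = y + δ • cbar - f (xk k) := by
          rw [add_smul]; abel
        rwa [this] at h3
      have hxin : x ∈ {z : X | (y + δ • cbar) - f z - (0:X → ℝ) z • cbar ∈ C} :=
        hS.mem_of_tendsto hx hev
      simp only [Set.mem_setOf_eq, Pi.zero_apply, zero_smul, sub_zero] at hxin
      have : y + δ • cbar - f x = y - f x + δ • cbar := by abel
      rwa [this] at hxin
    -- Step 2: let δ → 0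
    have htend : Tendsto (fun n : ℕ => y - f x + (1 / (n + 1) : ℝ) • cbar) atTop
        (nhds (y - f x)) := by
      have h1 : Tendsto (fun n : ℕ => (1 / (n + 1) : ℝ)) atTop (nhds 0) :=
        tendsto_one_div_add_atTop_nhds_zero_nat
      have := (h1.smul_const cbar).const_add (y - f x)
      simpa using this
    exact hCclosed.mem_of_tendsto htend
      (Filter.Eventually.of_forall fun n =>
        key _ (by positivity))
end

section
/- If f is C-lower semicontinuous (in the sense that for every x̄ and every neighbourhood V of f(x̄) there is a neighbourhood U of x̄ with f(U) ⊆ V + C) and C is closed, then f is C-lower semicontinuous with respect to any c̄ ∈ C. -/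
open Filter Topology Pointwise

/-- If `f` is `C`-lower semicontinuous (neighbourhood sense) and `C` is
closed, then `f` is `C`-lower semicontinuous with respect to any `cbar ∈ C`. -/
theorem stmt_9 {X : Type*} [MetricSpace X] {Y : Type*} [NormedAddCommGroup Y]
    [NormedSpace ℝ Y] (C : Set Y)
    (hC0 : (0:Y) ∈ C)
    (hCadd : ∀ a ∈ C, ∀ b ∈ C, a + b ∈ C)
    (hCsmul : ∀ a ∈ C, ∀ t : ℝ, 0 < t → t • a ∈ C)
    (hCpointed : C ∩ (-C) = {(0:Y)}) (hCclosed : IsClosed C)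
    (f : X → Y)
    (hlsc : ∀ xbar : X, ∀ V ∈ nhds (f xbar), ∃ U ∈ nhds xbar, f '' U ⊆ V + C) :
    ∀ cbar ∈ C, ∀ (x : X) (xk : ℕ → X) (εk : ℕ → ℝ) (y : Y),
      Tendsto xk atTop (nhds x) → Tendsto εk atTop (nhds 0) →
      (∀ k, y - f (xk k) - εk k • cbar ∈ C) → y - f x ∈ C := by
  intro cbar hcbar x xk εk y hx hε hmem
  have key : ∀ n : ℕ, ∃ w ∈ C, ‖(y - f x) - w‖ ≤ (1 + ‖cbar‖) * (1/(n+1)) := by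
    intro n
    have hpos : (0:ℝ) < 1/(n+1) := by positivity
    obtain ⟨U, hU, hfU⟩ := hlsc x (Metric.ball (f x) (1/(n+1)))
      (Metric.ball_mem_nhds _ hpos)
    have h1 : ∀ᶠ k in atTop, xk k ∈ U := hx hU
    have h2 : ∀ᶠ k in atTop, εk k ∈ Metric.ball (0:ℝ) (1/(n+1)) :=
      hε (Metric.ball_mem_nhds _ hpos)
    obtain ⟨k, hkU, hkε⟩ := (h1.and h2).exists
    have hfk : f (xk k) ∈ Metric.ball (f x) (1/(n+1)) + C :=
      hfU ⟨xk k, hkU, rfl⟩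
    obtain ⟨v, hv, c, hc, hvc⟩ := Set.mem_add.mp hfk
    refine ⟨(y - f (xk k) - εk k • cbar) + c, hCadd _ (hmem k) _ hc, ?_⟩
    have heq : (y - f x) - ((y - f (xk k) - εk k • cbar) + c)
        = (v - f x) + εk k • cbar := by
      rw [← hvc]; abel
    rw [heq]
    have hvnorm : ‖v - f x‖ ≤ 1/(n+1) := by
      have := Metric.mem_ball.mp hv
      rw [dist_eq_norm] at this
      linarith
    have hεnorm : |εk k| ≤ 1/(n+1) := by
      have := Metric.mem_ball.mp hkε
      rw [Real.dist_eq, sub_zero] at this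
      linarith
    calc ‖(v - f x) + εk k • cbar‖ ≤ ‖v - f x‖ + ‖εk k • cbar‖ := norm_add_le _ _
      _ = ‖v - f x‖ + |εk k| * ‖cbar‖ := by rw [norm_smul, Real.norm_eq_abs]
      _ ≤ 1/(n+1) + (1/(n+1)) * ‖cbar‖ := by
          have : |εk k| * ‖cbar‖ ≤ (1/(n+1)) * ‖cbar‖ :=
            mul_le_mul_of_nonneg_right hεnorm (norm_nonneg _)
          linarith
      _ = (1 + ‖cbar‖) * (1/(n+1)) := by ring
  choose w hwC hwnorm using key
  have hlim : Tendsto w atTop (nhds (y - f x)) := by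
    rw [tendsto_iff_norm_sub_tendsto_zero]
    have hg : Tendsto (fun n : ℕ => (1 + ‖cbar‖) * (1/(n+1) : ℝ)) atTop (nhds 0) := by
      have : Tendsto (fun n : ℕ => (1/(n+1) : ℝ)) atTop (nhds 0) :=
        tendsto_one_div_add_atTop_nhds_zero_nat
      simpa using this.const_mul (1 + ‖cbar‖)
    exact squeeze_zero (fun n => norm_nonneg _)
      (fun n => by rw [norm_sub_rev]; exact hwnorm n) hg
  exact hCclosed.mem_of_tendsto hlim (Eventually.of_forall hwC)
end

section
/- If, under the hypotheses and conclusions of the Borwein–Preiss vector variational principle with N = +∞, x ∈ X \ {x̄} is such that the series Σ_{i≥0} δ_i ρ(x,x_i) converges, then f(x̄) + (Σ_{i≥0} δ_i ρ(x̄,x_i))·c̄ − f(x) − (Σ_{i≥0} δ_i ρ(x,x_i))·c̄ ∉ C. -/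
open Filter Topology

/-! The partial sums of a series of nonnegative terms lie below its sum, and a set closed under
addition and positive scaling is stable under adding nonnegative multiples of its element `c̄`.
Hence if `v - P • c̄ ∉ C` for a partial sum `P`, also `v - S • c̄ ∉ C` for the full sum `S`. -/

theorem sub_smul_notMem_of_le {𝕜 Y : Type*} [Ring 𝕜] [PartialOrder 𝕜] [IsOrderedRing 𝕜]
    [AddCommGroup Y] [Module 𝕜 Y] {C : Set Y}
    (hCadd : ∀ a ∈ C, ∀ b ∈ C, a + b ∈ C) (hCsmul : ∀ a ∈ C, ∀ t : 𝕜, 0 < t → t • a ∈ C)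
    {c v : Y} (hc : c ∈ C) {s t : 𝕜} (hst : s ≤ t) (hs : v - s • c ∉ C) :
    v - t • c ∉ C := by
  intro ht
  rcases hst.eq_or_lt with rfl | hlt
  · exact hs ht
  · have hsplit : v - s • c = (v - t • c) + (t - s) • c := by rw [sub_smul]; abel
    exact hs (hsplit ▸ hCadd _ ht _ (hCsmul c hc _ (sub_pos.2 hlt)))

theorem stmt_13_general {X : Type*}
    {Y : Type*} [NormedAddCommGroup Y] [NormedSpace ℝ Y] (C : Set Y)
    (hCadd : ∀ a ∈ C, ∀ b ∈ C, a + b ∈ C)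
    (hCsmul : ∀ a ∈ C, ∀ t : ℝ, 0 < t → t • a ∈ C)
    (cbar : Y) (hcbar : cbar ∈ interior C)
    (f : X → Y)
    (ρ : X → X → ℝ) (hρnonneg : ∀ x y, 0 ≤ ρ x y)
    (δs : ℕ → ℝ) (hδs : ∀ i, 0 < δs i)
    (xbar : X) (xs : ℕ → X)
    (hiv : ∀ x : X, x ≠ xbar → ∃ m0 : ℕ, ∀ m ≥ m0,
      f xbar + (∑' i, δs i * ρ xbar (xs i)) • cbar - f x
        - (∑ i ∈ Finset.range (m + 1), δs i * ρ x (xs i)) • cbar ∉ C) :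
    ∀ x : X, x ≠ xbar → Summable (fun i => δs i * ρ x (xs i)) →
      f xbar + (∑' i, δs i * ρ xbar (xs i)) • cbar - f x
        - (∑' i, δs i * ρ x (xs i)) • cbar ∉ C := by
  intro x hx hsum
  obtain ⟨m0, hm0⟩ := hiv x hx
  have hpartial_le : ∑ i ∈ Finset.range (m0 + 1), δs i * ρ x (xs i) ≤ ∑' i, δs i * ρ x (xs i) :=
    hsum.sum_le_tsum _ fun i _ => mul_nonneg (hδs i).le (hρnonneg _ _)
  exact sub_smul_notMem_of_le hCadd hCsmul (interior_subset hcbar) hpartial_le (hm0 m0 le_rfl)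

/-- Under the setting of the Borwein–Preiss vector variational principle
with `N = +∞` (conclusion (iv) assumed for the point `xbar` and sequence `xs`), if
`x ≠ xbar` and the series `Σ δ_i ρ(x, x_i)` converges, then
`f xbar + (Σ δ_i ρ(xbar, x_i)) • cbar - f x - (Σ δ_i ρ(x, x_i)) • cbar ∉ C`. -/
theorem stmt_13 {X : Type*} [MetricSpace X] [CompleteSpace X]
    {Y : Type*} [NormedAddCommGroup Y] [NormedSpace ℝ Y] (C : Set Y)
    (hC0 : (0:Y) ∈ C)
    (hCadd : ∀ a ∈ C, ∀ b ∈ C, a + b ∈ C)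
    (hCsmul : ∀ a ∈ C, ∀ t : ℝ, 0 < t → t • a ∈ C)
    (hCpointed : C ∩ (-C) = {(0:Y)}) (hCclosed : IsClosed C)
    (cbar : Y) (hcbar : cbar ∈ interior C)
    (f : X → Y)
    (ρ : X → X → ℝ) (hρnonneg : ∀ x y, 0 ≤ ρ x y)
    (δs : ℕ → ℝ) (hδs : ∀ i, 0 < δs i)
    (xbar : X) (xs : ℕ → X)
    (hSumbar : Summable (fun i => δs i * ρ xbar (xs i)))
    (hiv : ∀ x : X, x ≠ xbar → ∃ m0 : ℕ, ∀ m ≥ m0,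
      f xbar + (∑' i, δs i * ρ xbar (xs i)) • cbar - f x
        - (∑ i ∈ Finset.range (m + 1), δs i * ρ x (xs i)) • cbar ∉ C) :
    ∀ x : X, x ≠ xbar → Summable (fun i => δs i * ρ x (xs i)) →
      f xbar + (∑' i, δs i * ρ xbar (xs i)) • cbar - f x
        - (∑' i, δs i * ρ x (xs i)) • cbar ∉ C :=
  stmt_13_general C hCadd hCsmul cbar hcbar f ρ hρnonneg δs hδs xbar xs hiv
end
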